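/- For every fixed i ∈ ℕ and every t ∈ [0,T], lim_{N→∞} Σ_{j=i+1}^{N−1} φ_N^j(t) φ_N^{N+i−j}(t) = 0. -/

import Mathlib

open scoped BigOperators

/-- The sequence ε^i : ε^0 = ε, ε^1 = -ε, ε^i = 0 for i ≥ 2 (natural index). -/
noncomputable def epsN (ε : ℝ) : ℕ → ℝ := fun i => if i = 0 then ε else if i = 1 then -ε else 0

/-- The sequence ε^i with integer index. -/
noncomputable def epsZ (ε : ℝ) : ℤ → ℝ := fun i => if i = 0 then ε else if i = 1 then -ε else 0

/-- `ϕ` is a solution of the infinite Riccati system on `[0,T]`: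
`(d/dt) ϕ^i(t) = ∑_{j=0}^i ϕ^j(t) ϕ^{i-j}(t) - ε^i` with terminal conditions
`ϕ^0(T) = c`, `ϕ^1(T) = -c`, `ϕ^i(T) = 0` for `i ≥ 2`. -/
def IsInfRiccatiSol (T ε c : ℝ) (ϕ : ℕ → ℝ → ℝ) : Prop :=
  (∀ i : ℕ, ∀ t ∈ Set.Icc (0:ℝ) T,
    HasDerivWithinAt (ϕ i)
      ((∑ j ∈ Finset.range (i + 1), ϕ j t * ϕ (i - j) t) - epsN ε i)
      (Set.Icc (0:ℝ) T) t) ∧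
  ϕ 0 T = c ∧ ϕ 1 T = -c ∧ ∀ i : ℕ, 2 ≤ i → ϕ i T = 0

/-- `φ` is a solution of the `N`-periodic Riccati system on `[0,T]`:
`φ^{i+N} = φ^i`, `(d/dt) φ^i(t) = ∑_{j=0}^{N-1} φ^j(t) φ^{N+i-j}(t) - ε^i` for
`i = 0,…,N-1`, with terminal conditions `φ^0(T) = c`, `φ^1(T) = -c`, `φ^i(T) = 0`
for `2 ≤ i ≤ N-1`. -/
def IsPerRiccatiSol (T ε c : ℝ) (N : ℕ) (φ : ℤ → ℝ → ℝ) : Prop :=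
  (∀ i : ℤ, φ (i + (N : ℤ)) = φ i) ∧
  (∀ i : ℕ, i < N → ∀ t ∈ Set.Icc (0:ℝ) T,
    HasDerivWithinAt (φ (i : ℤ))
      ((∑ j ∈ Finset.range N, φ (j : ℤ) t * φ ((N : ℤ) + (i : ℤ) - (j : ℤ)) t) - epsZ ε (i : ℤ))
      (Set.Icc (0:ℝ) T) t) ∧
  φ 0 T = c ∧ φ 1 T = -c ∧ ∀ i : ℕ, 2 ≤ i → i < N → φ (i : ℤ) T = 0

/-!
Reading indices modulo `N`, the periodic system becomes `x' = x ⋆ x - ε` on the cyclic group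
`ZMod N`, where `⋆` is convolution. Summing over the group, `σ = ∑ g, x g` solves `σ' = σ²` with
`σ(T) = 0`, hence `σ ≡ 0`. A Grönwall argument backwards from `T` applied to
`∑_{g ≠ 0} (x g)⁺²` shows `x g ≤ 0` for `g ≠ 0`. As `g ↦ g.val` is subadditive and these
`x g` have a sign, the moment `m = ∑ g, g.val * (-x g)` satisfies `-m' ≤ ε`, so
`m(t) ≤ c + ε (T - t) =: M`. In particular `-x k ≤ M` for `k ≥ 1`, and since
`j + (N + i - j) ≥ N`, `N x_j x_{N+i-j} ≤ M (j (-x_j) + (N+i-j) (-x_{N+i-j}))`; summing over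
`j` bounds the tail by `2 M² / N`.
-/

open Finset Filter

theorem epsN_nonpos {a : ℝ} (ha : 0 ≤ a) {k : ℕ} (hk : k ≠ 0) : epsN a k ≤ 0 := by
  unfold epsN
  split_ifs <;> first | omega | linarith

theorem sum_range_epsN {N : ℕ} (hN : 2 ≤ N) (a : ℝ) : ∑ k ∈ range N, epsN a k = 0 := by
  obtain ⟨n, rfl⟩ := Nat.exists_eq_add_of_le' hN
  simp [sum_range_succ', epsN]

theorem sum_range_mul_epsN {N : ℕ} (hN : 2 ≤ N) (a : ℝ) :
    ∑ k ∈ range N, (k : ℝ) * epsN a k = -a := by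
  obtain ⟨n, rfl⟩ := Nat.exists_eq_add_of_le' hN
  simp [sum_range_succ', epsN]

theorem epsZ_natCast (a : ℝ) (k : ℕ) : epsZ a k = epsN a k := by
  simp only [epsZ, epsN, Nat.cast_eq_zero, Nat.cast_eq_one]

theorem ZMod.sum_val_eq_sum_range {M : Type*} [AddCommMonoid M] {N : ℕ} [NeZero N]
    (f : ℕ → M) : ∑ g : ZMod N, f g.val = ∑ k ∈ range N, f k :=
  sum_nbij' (fun g => g.val) (fun k => (k : ZMod N)) (by simp [ZMod.val_lt]) (by simp) (by simp)
    (fun _ hk => ZMod.val_cast_of_lt (mem_range.1 hk)) (by simp)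

theorem Function.Periodic.apply_val_intCast {α : Type*} {f : ℤ → α} {N : ℕ} [NeZero N]
    (hf : Function.Periodic f N) (m : ℤ) : f ((m : ZMod N).val : ℤ) = f m := by
  rw [ZMod.val_intCast, Int.emod_def, mul_comm]
  exact hf.sub_int_mul_eq _

theorem posPart_mul_self (u : ℝ) : u⁺ * u = u⁺ ^ 2 := by
  rcases le_total u 0 with hu | hu
  · simp [posPart_eq_zero.2 hu]
  · simp [posPart_eq_self.2 hu, sq]

theorem neg_mul_le_mul_posPart_add {u v B : ℝ} (hu : |u| ≤ B) (hv : |v| ≤ B) :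
    -(u * v) ≤ B * (u⁺ + v⁺) := by
  rcases abs_le.1 hu with ⟨hu₁, hu₂⟩
  rcases abs_le.1 hv with ⟨hv₁, hv₂⟩
  rcases le_total u 0 with hu0 | hu0 <;> rcases le_total v 0 with hv0 | hv0 <;>
    simp only [posPart_eq_zero.2, posPart_eq_self.2, hu0, hv0] <;> nlinarith

theorem hasDerivAt_posPart_sq (v : ℝ) : HasDerivAt (fun u : ℝ => u⁺ ^ 2) (2 * v⁺) v := by
  rcases lt_trichotomy v 0 with hv | rfl | hv
  · have hloc : (fun u : ℝ => u⁺ ^ 2) =ᶠ[nhds v] fun _ => 0 := by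
      filter_upwards [Iio_mem_nhds hv] with u hu
      simp [posPart_eq_zero.2 (Set.mem_Iio.1 hu).le]
    simpa [posPart_eq_zero.2 hv.le] using (hasDerivAt_const v (0 : ℝ)).congr_of_eventuallyEq hloc
  · rw [hasDerivAt_iff_isLittleO_nhds_zero]
    have hbig : (fun u : ℝ => u⁺ ^ 2) =O[nhds 0] fun u => u ^ 2 :=
      Asymptotics.isBigO_of_le _ fun u => by
        rcases le_total u 0 with hu | hu
        · simp [posPart_eq_zero.2 hu, sq_nonneg]
        · simp [posPart_eq_self.2 hu]
    simpa using hbig.trans_isLittleO (Asymptotics.isLittleO_pow_id one_lt_two)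
  · have hloc : (fun u : ℝ => u⁺ ^ 2) =ᶠ[nhds v] fun u => u ^ 2 := by
      filter_upwards [Ioi_mem_nhds hv] with u hu
      rw [posPart_eq_self.2 (Set.mem_Ioi.1 hu).le]
    simpa [posPart_eq_self.2 hv.le] using (hasDerivAt_pow 2 v).congr_of_eventuallyEq hloc

section Autoconv

variable {G R : Type*} [AddGroup G] [Fintype G]

def autoconv [Semiring R] (y : G → R) (g : G) : R := ∑ h, y h * y (g - h)

theorem sum_autoconv [Semiring R] (y : G → R) : ∑ g, autoconv y g = (∑ g, y g) ^ 2 := by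
  simp only [autoconv]
  rw [sum_comm, sq, sum_mul]
  refine sum_congr rfl fun h _ => ?_
  rw [← mul_sum, ← Equiv.sum_comp (Equiv.subRight h) y]
  rfl

theorem neg_mul_autoconv_le {y q : G → ℝ} {B : ℝ} (hB : ∀ h, |y h| ≤ B)
    (hq₀ : q 0 = 0) (hq : ∀ h ≠ 0, q h = (y h)⁺) (g : G) :
    -(q g * autoconv y g) ≤ 2 * B * q g * ∑ h, q h := by
  rcases eq_or_ne g 0 with rfl | hg
  · simp [hq₀]
  have hterm : ∀ h, -(q g * (y h * y (g - h))) ≤ B * q g * (q h + q (g - h)) := by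
    intro h
    rw [hq g hg]
    rcases eq_or_ne h 0 with rfl | hh
    · rw [sub_zero, hq₀, hq g hg, show -((y g)⁺ * (y 0 * y g)) = -y 0 * ((y g)⁺ * y g) by ring,
        posPart_mul_self]
      nlinarith [neg_le_of_abs_le (hB 0), sq_nonneg (y g)⁺]
    rcases eq_or_ne (g - h) 0 with hgh | hgh
    · obtain rfl : g = h := sub_eq_zero.1 hgh
      rw [sub_self, hq₀, hq g hg, show -((y g)⁺ * (y g * y 0)) = -y 0 * ((y g)⁺ * y g) by ring,
        posPart_mul_self]
      nlinarith [neg_le_of_abs_le (hB 0), sq_nonneg (y g)⁺]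
    · rw [hq h hh, hq (g - h) hgh]
      nlinarith [neg_mul_le_mul_posPart_add (hB h) (hB (g - h)), posPart_nonneg (y g)]
  have hreflect : ∑ h, q (g - h) = ∑ h, q h := Equiv.sum_comp (Equiv.subLeft g) q
  calc -(q g * autoconv y g) = ∑ h, -(q g * (y h * y (g - h))) := by
        simp only [autoconv, mul_sum, sum_neg_distrib]
    _ ≤ ∑ h, B * q g * (q h + q (g - h)) := sum_le_sum fun h _ => hterm h
    _ = 2 * B * q g * ∑ h, q h := by
        rw [← mul_sum, sum_add_distrib, hreflect]
        ring

theorem neg_sum_mul_autoconv_sub_le {y q e : G → ℝ} {B : ℝ}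
    (hB : ∀ h, |y h| ≤ B) (hq₀ : q 0 = 0) (hq : ∀ h ≠ 0, q h = (y h)⁺) (he : ∀ h ≠ 0, e h ≤ 0) :
    -∑ g, 2 * q g * (autoconv y g - e g) ≤ 4 * B * Fintype.card G * ∑ g, q g ^ 2 := by
  have hq_nonneg : ∀ g, 0 ≤ q g := fun g => by
    rcases eq_or_ne g 0 with rfl | hg
    · exact hq₀.ge
    · exact hq g hg ▸ posPart_nonneg _
  have hterm : ∀ g, -(2 * q g * (autoconv y g - e g)) ≤ 4 * B * q g * ∑ h, q h := by
    intro g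
    have hconv := neg_mul_autoconv_le hB hq₀ hq g
    have he : q g * e g ≤ 0 := by
      rcases eq_or_ne g 0 with rfl | hg
      · simp [hq₀]
      · exact mul_nonpos_of_nonneg_of_nonpos (hq_nonneg g) (he g hg)
    linarith
  have hB₀ : 0 ≤ B := (abs_nonneg _).trans (hB 0)
  have hCS : (∑ g, q g) ^ 2 ≤ Fintype.card G * ∑ g, q g ^ 2 := sq_sum_le_card_mul_sum_sq
  calc -∑ g, 2 * q g * (autoconv y g - e g) ≤ ∑ g, 4 * B * q g * ∑ h, q h := by
        rw [← sum_neg_distrib]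
        exact sum_le_sum fun g _ => hterm g
    _ = 4 * B * (∑ g, q g) ^ 2 := by rw [← sum_mul, ← mul_sum]; ring
    _ ≤ 4 * B * Fintype.card G * ∑ g, q g ^ 2 := by
        rw [mul_assoc _ (Fintype.card G : ℝ)]
        exact mul_le_mul_of_nonneg_left hCS (by positivity)

end Autoconv

theorem sum_val_mul_autoconv_nonpos {N : ℕ} [NeZero N] {y : ZMod N → ℝ} (hsum : ∑ g, y g = 0)
    (hy : ∀ g ≠ 0, y g ≤ 0) : ∑ g, (g.val : ℝ) * autoconv y g ≤ 0 := by
  have hcarry : ∀ h k : ZMod N,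
      ((h + k).val : ℝ) * (y h * y k) ≤ (h.val + k.val) * (y h * y k) := by
    intro h k
    rcases eq_or_ne h 0 with rfl | hh
    · simp
    rcases eq_or_ne k 0 with rfl | hk
    · simp
    exact mul_le_mul_of_nonneg_right (by exact_mod_cast ZMod.val_add_le h k)
      (mul_nonneg_of_nonpos_of_nonpos (hy h hh) (hy k hk))
  calc ∑ g, (g.val : ℝ) * autoconv y g
      = ∑ h, ∑ k, ((h + k).val : ℝ) * (y h * y k) := by
        simp only [autoconv, mul_sum]
        rw [sum_comm]
        refine sum_congr rfl fun h _ => ?_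
        rw [← Equiv.sum_comp (Equiv.addLeft h)]
        simp only [Equiv.coe_addLeft, add_sub_cancel_left]
    _ ≤ ∑ h, ∑ k, ((h.val : ℝ) + k.val) * (y h * y k) :=
        sum_le_sum fun h _ => sum_le_sum fun k _ => hcarry h k
    _ = (∑ h, (h.val : ℝ) * y h) * ∑ k, y k + (∑ h, y h) * ∑ k, (k.val : ℝ) * y k := by
        simp only [sum_mul_sum, ← sum_add_distrib]
        refine sum_congr rfl fun h _ => sum_congr rfl fun k _ => ?_
        ring
    _ = 0 := by rw [hsum]; ring

section BackwardGronwall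

open Set

theorem le_gronwallBound_of_neg_deriv_le {f f' : ℝ → ℝ} {a b δ K ε : ℝ}
    (hf : ∀ t ∈ Icc a b, HasDerivWithinAt f (f' t) (Icc a b) t) (hb : f b ≤ δ)
    (bound : ∀ t ∈ Ioc a b, -f' t ≤ K * f t + ε) :
    ∀ t ∈ Icc a b, f t ≤ gronwallBound δ K ε (b - t) := by
  have hrefl : MapsTo (fun s => a + b - s) (Icc a b) (Icc a b) := fun s hs =>
    ⟨by linarith [hs.2], by linarith [hs.1]⟩
  have hg : ∀ s ∈ Icc a b,
      HasDerivWithinAt (fun s => f (a + b - s)) (-f' (a + b - s)) (Icc a b) s := fun s hs => by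
    simpa [Function.comp_def] using
      (hf _ (hrefl hs)).comp s ((hasDerivWithinAt_id s _).const_sub (a + b)) hrefl
  have hgron := le_gronwallBound_of_liminf_deriv_right_le (f := fun s => f (a + b - s))
    (fun s hs => (hg s hs).continuousWithinAt)
    (fun s hs r hr => by
      have hIci := (hg s ⟨hs.1, hs.2.le⟩).mono_of_mem_nhdsWithin (Icc_mem_nhdsGE_of_mem hs)
      exact (hIci.liminf_right_slope_le hr).mono fun z hz => by
        simpa [slope_def_field, div_eq_inv_mul] using hz)
    (by simpa using hb)
    (fun s hs => by simpa using bound (a + b - s) ⟨by linarith [hs.2], by linarith [hs.1]⟩)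
  intro t ht
  simpa [show a + b - t - a = b - t by ring] using hgron (a + b - t) (hrefl ht)

theorem nonpos_of_neg_deriv_le_mul {f f' : ℝ → ℝ} {a b K : ℝ}
    (hf : ∀ t ∈ Icc a b, HasDerivWithinAt f (f' t) (Icc a b) t) (hb : f b ≤ 0)
    (bound : ∀ t ∈ Ioc a b, -f' t ≤ K * f t) : ∀ t ∈ Icc a b, f t ≤ 0 := fun t ht => by
  simpa [gronwallBound_ε0_δ0] using
    le_gronwallBound_of_neg_deriv_le (K := K) (ε := 0) hf hb
      (fun t ht => by simpa using bound t ht) t ht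

theorem le_add_mul_of_neg_deriv_le {f f' : ℝ → ℝ} {a b δ ε : ℝ}
    (hf : ∀ t ∈ Icc a b, HasDerivWithinAt f (f' t) (Icc a b) t) (hb : f b ≤ δ)
    (bound : ∀ t ∈ Ioc a b, -f' t ≤ ε) : ∀ t ∈ Icc a b, f t ≤ δ + ε * (b - t) := fun t ht => by
  simpa [gronwallBound_K0] using
    le_gronwallBound_of_neg_deriv_le (K := 0) hf hb (fun t ht => by simpa using bound t ht) t ht

theorem eqOn_zero_of_hasDerivWithinAt_sq {σ : ℝ → ℝ} {a b : ℝ}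
    (hσ : ∀ t ∈ Icc a b, HasDerivWithinAt σ (σ t ^ 2) (Icc a b) t) (hb : σ b = 0) :
    EqOn σ 0 (Icc a b) := by
  obtain ⟨B, hB⟩ := isCompact_Icc.exists_bound_of_continuousOn fun t ht =>
    (hσ t ht).continuousWithinAt
  have hsq : ∀ t ∈ Icc a b, σ t ^ 2 ≤ 0 :=
    nonpos_of_neg_deriv_le_mul (K := 2 * B) (fun t ht => (hσ t ht).pow 2) (by simp [hb])
      fun t ht => by
        have := neg_le_of_abs_le (hB t (Ioc_subset_Icc_self ht))
        simp only [Nat.cast_ofNat, Nat.reduceSub, pow_one]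
        nlinarith [sq_nonneg (σ t)]
  exact fun t ht => pow_eq_zero_iff two_ne_zero |>.1 (le_antisymm (hsq t ht) (sq_nonneg _))

end BackwardGronwall

structure IsCyclicRiccatiSol (T ε c : ℝ) {N : ℕ} [NeZero N] (x : ZMod N → ℝ → ℝ) : Prop where
  hasDerivWithinAt : ∀ g, ∀ t ∈ Set.Icc 0 T,
    HasDerivWithinAt (x g) (autoconv (x · t) g - epsN ε g.val) (Set.Icc 0 T) t
  terminal : ∀ g, x g T = epsN c g.val

namespace IsCyclicRiccatiSol

variable {T ε c : ℝ} {N : ℕ} [NeZero N] {x : ZMod N → ℝ → ℝ}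

theorem sum_eq_zero (hx : IsCyclicRiccatiSol T ε c x) (hN : 2 ≤ N) :
    ∀ t ∈ Set.Icc 0 T, ∑ g, x g t = 0 :=
  eqOn_zero_of_hasDerivWithinAt_sq
    (fun t ht => by
      have := HasDerivWithinAt.fun_sum fun g (_ : g ∈ univ) => hx.hasDerivWithinAt g t ht
      rwa [sum_sub_distrib, sum_autoconv, ZMod.sum_val_eq_sum_range (epsN ε),
        sum_range_epsN hN, sub_zero] at this)
    (by simp only [hx.terminal, ZMod.sum_val_eq_sum_range (epsN c), sum_range_epsN hN])

theorem exists_abs_le (hx : IsCyclicRiccatiSol T ε c x) :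
    ∃ B, ∀ g, ∀ t ∈ Set.Icc 0 T, |x g t| ≤ B := by
  obtain ⟨B, hB⟩ := isCompact_Icc.exists_bound_of_continuousOn (f := fun t g => x g t)
    (continuousOn_pi.2 fun g t ht => (hx.hasDerivWithinAt g t ht).continuousWithinAt)
  exact ⟨B, fun g t ht => (norm_le_pi_norm (fun g => x g t) g).trans (hB t ht)⟩

theorem nonpos (hx : IsCyclicRiccatiSol T ε c x) (hε : 0 ≤ ε) (hc : 0 ≤ c) :
    ∀ g ≠ 0, ∀ t ∈ Set.Icc 0 T, x g t ≤ 0 := by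
  obtain ⟨B, hB⟩ := hx.exists_abs_le
  set q : ZMod N → ℝ → ℝ := fun g t => if g = 0 then 0 else (x g t)⁺
  have hderiv : ∀ g, ∀ t ∈ Set.Icc 0 T, HasDerivWithinAt (fun t => q g t ^ 2)
      (2 * q g t * (autoconv (x · t) g - epsN ε g.val)) (Set.Icc 0 T) t := by
    intro g t ht
    by_cases hg : g = 0
    · simpa [q, hg] using hasDerivWithinAt_const t (Set.Icc 0 T) (0 : ℝ)
    · simpa [q, hg, mul_assoc, Function.comp_def] using
        (hasDerivAt_posPart_sq (x g t)).comp_hasDerivWithinAt t (hx.hasDerivWithinAt g t ht)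
  have hterminal : ∑ g, q g T ^ 2 ≤ 0 := by
    refine (Finset.sum_eq_zero fun g _ => ?_).le
    by_cases hg : g = 0
    · simp [q, hg]
    · simp [q, hg, hx.terminal, posPart_eq_zero.2 (epsN_nonpos hc ((ZMod.val_ne_zero g).2 hg))]
  have hW := nonpos_of_neg_deriv_le_mul (f := fun t => ∑ g, q g t ^ 2)
    (fun t ht => HasDerivWithinAt.fun_sum fun g _ => hderiv g t ht) hterminal
    fun t ht => by
      simpa using neg_sum_mul_autoconv_sub_le (fun h => hB h t (Set.Ioc_subset_Icc_self ht))
        (q := (q · t)) (by simp [q]) (fun h hh => by simp [q, hh])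
        fun g hg => epsN_nonpos hε ((ZMod.val_ne_zero g).2 hg)
  intro g hg t ht
  have hqg : q g t ^ 2 ≤ 0 :=
    (single_le_sum (fun h _ => sq_nonneg (q h t)) (mem_univ g)).trans (hW t ht)
  simpa [q, hg] using hqg

theorem sum_val_mul_neg_le (hx : IsCyclicRiccatiSol T ε c x) (hN : 2 ≤ N) (hε : 0 ≤ ε)
    (hc : 0 ≤ c) : ∀ t ∈ Set.Icc 0 T, ∑ g, (g.val : ℝ) * -x g t ≤ c + ε * (T - t) := by
  have hmoment : ∀ a, ∑ g : ZMod N, (g.val : ℝ) * epsN a g.val = -a := fun a =>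
    (ZMod.sum_val_eq_sum_range fun k => (k : ℝ) * epsN a k).trans (sum_range_mul_epsN hN a)
  refine le_add_mul_of_neg_deriv_le
    (fun t ht => HasDerivWithinAt.fun_sum fun g (_ : g ∈ univ) =>
      (hx.hasDerivWithinAt g t ht).neg.const_mul (g.val : ℝ))
    (by simp only [hx.terminal, mul_neg, sum_neg_distrib, hmoment, neg_neg, le_refl])
    fun t ht => ?_
  have ht' := Set.Ioc_subset_Icc_self ht
  have hconv := sum_val_mul_autoconv_nonpos (hx.sum_eq_zero hN t ht')
    fun g hg => hx.nonpos hε hc g hg t ht'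
  simp only [mul_neg, mul_sub, sum_neg_distrib, sum_sub_distrib, hmoment]
  linarith

end IsCyclicRiccatiSol

namespace IsPerRiccatiSol

variable {T ε c : ℝ} {N : ℕ} {φ : ℤ → ℝ → ℝ}

theorem isCyclicRiccatiSol [NeZero N] (h : IsPerRiccatiSol T ε c N φ) :
    IsCyclicRiccatiSol T ε c fun g : ZMod N => φ g.val := by
  obtain ⟨hper, hderiv, h₀, h₁, hterm⟩ := h
  have hmod : ∀ m : ℤ, φ ((m : ZMod N).val : ℤ) = φ m :=
    Function.Periodic.apply_val_intCast (f := φ) hper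
  refine ⟨fun g t ht => ?_, fun g => ?_⟩
  · convert hderiv g.val (ZMod.val_lt g) t ht using 2
    · rw [autoconv, ← ZMod.sum_val_eq_sum_range (fun j => φ j t * φ (N + g.val - j) t)]
      refine sum_congr rfl fun h _ => ?_
      have hcast : (((N : ℤ) + g.val - h.val : ℤ) : ZMod N) = g - h := by
        push_cast [ZMod.natCast_self, ZMod.natCast_zmod_val]
        ring
      rw [← hmod ((N : ℤ) + g.val - h.val), hcast]
    · exact (epsZ_natCast ε g.val).symm
  · rcases Nat.lt_or_ge g.val 2 with hg | hg
    · interval_cases hv : g.val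
      · simpa [epsN, (ZMod.val_eq_zero g).1 hv] using h₀
      · simpa [epsN, hv] using h₁
    · rw [hterm _ hg (ZMod.val_lt g), epsN, if_neg (by omega), if_neg (by omega)]

theorem nonpos (h : IsPerRiccatiSol T ε c N φ) (hε : 0 ≤ ε) (hc : 0 ≤ c) {k : ℕ}
    (hk : k ∈ Ico 1 N) : ∀ t ∈ Set.Icc 0 T, φ k t ≤ 0 := by
  obtain ⟨hk₁, hkN⟩ := mem_Ico.1 hk
  have : NeZero N := ⟨by omega⟩
  have hval : (k : ZMod N).val = k := ZMod.val_cast_of_lt hkN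
  intro t ht
  have := h.isCyclicRiccatiSol.nonpos hε hc k (by rw [← ZMod.val_ne_zero, hval]; omega) t ht
  rwa [hval] at this

theorem sum_range_mul_neg_le (h : IsPerRiccatiSol T ε c N φ) (hN : 2 ≤ N) (hε : 0 ≤ ε)
    (hc : 0 ≤ c) : ∀ t ∈ Set.Icc 0 T, ∑ k ∈ range N, (k : ℝ) * -φ k t ≤ c + ε * (T - t) := by
  have : NeZero N := ⟨by omega⟩
  intro t ht
  rw [← ZMod.sum_val_eq_sum_range fun k => (k : ℝ) * -φ k t]
  exact h.isCyclicRiccatiSol.sum_val_mul_neg_le hN hε hc t ht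

end IsPerRiccatiSol

theorem mul_mul_le_of_le_add {u v a b n M : ℝ} (hu : 0 ≤ u) (hv : 0 ≤ v) (huM : u ≤ M)
    (hvM : v ≤ M) (ha : 0 ≤ a) (hb : 0 ≤ b) (hn : n ≤ a + b) :
    n * (u * v) ≤ M * (a * u) + M * (b * v) := by
  nlinarith [mul_nonneg (mul_nonneg hu hv) (sub_nonneg.2 hn),
    mul_nonneg (mul_nonneg ha hu) (sub_nonneg.2 hvM),
    mul_nonneg (mul_nonneg hb hv) (sub_nonneg.2 huM)]

section Tail

variable {N : ℕ} {u : ℕ → ℝ}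

theorem sum_Ico_mul_reflect_nonneg (hu : ∀ k ∈ Ico 1 N, 0 ≤ u k) (i : ℕ) :
    0 ≤ ∑ j ∈ Ico (i + 1) N, u j * u (N + i - j) :=
  sum_nonneg fun j hj => by
    have := mem_Ico.1 hj
    exact mul_nonneg (hu j (mem_Ico.2 ⟨by omega, this.2⟩)) (hu _ (mem_Ico.2 ⟨by omega, by omega⟩))

theorem sum_Ico_mul_reflect_le {M : ℝ} (hu : ∀ k ∈ Ico 1 N, 0 ≤ u k)
    (hM : ∑ k ∈ range N, (k : ℝ) * u k ≤ M) (i : ℕ) :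
    ∑ j ∈ Ico (i + 1) N, u j * u (N + i - j) ≤ 2 * M ^ 2 / N := by
  rcases Nat.eq_zero_or_pos N with rfl | hN
  · simp
  have hnonneg : ∀ k ∈ range N, 0 ≤ (k : ℝ) * u k := fun k hk => by
    rcases Nat.eq_zero_or_pos k with rfl | hk₀
    · simp
    · exact mul_nonneg k.cast_nonneg (hu k (mem_Ico.2 ⟨hk₀, mem_range.1 hk⟩))
  have hM₀ : 0 ≤ M := (sum_nonneg hnonneg).trans hM
  have huM : ∀ k ∈ Ico 1 N, u k ≤ M := fun k hk => by
    obtain ⟨hk₁, hkN⟩ := mem_Ico.1 hk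
    calc u k ≤ k * u k := le_mul_of_one_le_left (hu k hk) (by exact_mod_cast hk₁)
      _ ≤ ∑ k ∈ range N, (k : ℝ) * u k := single_le_sum hnonneg (mem_range.2 hkN)
      _ ≤ M := hM
  have hpartial : ∑ j ∈ Ico (i + 1) N, (j : ℝ) * u j ≤ M :=
    (sum_le_sum_of_subset_of_nonneg (fun k hk => mem_range.2 (mem_Ico.1 hk).2)
      fun k hk _ => hnonneg k hk).trans hM
  have hreflect : ∑ j ∈ Ico (i + 1) N, ((N + i - j : ℕ) : ℝ) * u (N + i - j)
      = ∑ j ∈ Ico (i + 1) N, (j : ℝ) * u j := by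
    rw [sum_Ico_reflect (fun k => (k : ℝ) * u k) (i + 1) (by omega : N ≤ N + i + 1),
      show N + i + 1 - N = i + 1 by omega, show N + i + 1 - (i + 1) = N by omega]
  have hterm : ∀ j ∈ Ico (i + 1) N, N * (u j * u (N + i - j))
      ≤ M * (j * u j) + M * ((N + i - j : ℕ) * u (N + i - j)) := fun j hj => by
    obtain ⟨hij, hjN⟩ := mem_Ico.1 hj
    have hj₁ : j ∈ Ico 1 N := mem_Ico.2 ⟨by omega, hjN⟩
    have hb₁ : N + i - j ∈ Ico 1 N := mem_Ico.2 ⟨by omega, by omega⟩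
    exact mul_mul_le_of_le_add (hu j hj₁) (hu _ hb₁) (huM j hj₁) (huM _ hb₁) j.cast_nonneg
      (N + i - j).cast_nonneg (by exact_mod_cast (by omega : N ≤ j + (N + i - j)))
  rw [le_div_iff₀ (by exact_mod_cast hN), mul_comm, mul_sum]
  calc ∑ j ∈ Ico (i + 1) N, N * (u j * u (N + i - j))
      ≤ ∑ j ∈ Ico (i + 1) N, (M * (j * u j) + M * ((N + i - j : ℕ) * u (N + i - j))) :=
        sum_le_sum hterm
    _ = M * ∑ j ∈ Ico (i + 1) N, (j : ℝ) * u j + M * ∑ j ∈ Ico (i + 1) N, (j : ℝ) * u j := by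
        rw [sum_add_distrib, ← mul_sum, ← mul_sum, hreflect]
    _ ≤ 2 * M ^ 2 := by nlinarith

end Tail

theorem catalan_riccati_tail_convergence
    (T ε c : ℝ) (hε : 0 < ε) (hc : 0 ≤ c)
    (φ : ℕ → ℤ → ℝ → ℝ) (hφ : ∀ N : ℕ, 2 ≤ N → IsPerRiccatiSol T ε c N (φ N)) :
    ∀ i : ℕ, ∀ t ∈ Set.Icc (0:ℝ) T,
      Filter.Tendsto
        (fun N : ℕ =>
          ∑ j ∈ Finset.Ico (i + 1) N, φ N (j : ℤ) t * φ N ((N : ℤ) + (i : ℤ) - (j : ℤ)) t)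
        Filter.atTop (nhds 0) := by
  intro i t ht
  have hS : ∀ N : ℕ, ∑ j ∈ Ico (i + 1) N, φ N j t * φ N ((N : ℤ) + i - j) t
      = ∑ j ∈ Ico (i + 1) N, -φ N j t * -φ N ((N + i - j : ℕ) : ℤ) t := fun N =>
    sum_congr rfl fun j hj => by
      rw [neg_mul_neg, Nat.cast_sub (by have := (mem_Ico.1 hj).2; omega), Nat.cast_add]
  have hu : ∀ N ≥ 2, ∀ k ∈ Ico 1 N, 0 ≤ -φ N k t := fun N hN k hk =>
    neg_nonneg.2 ((hφ N hN).nonpos hε.le hc hk t ht)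
  refine tendsto_of_tendsto_of_tendsto_of_le_of_le' tendsto_const_nhds
    (tendsto_const_div_atTop_nhds_zero_nat (2 * (c + ε * (T - t)) ^ 2)) ?_ ?_ <;>
    filter_upwards [eventually_ge_atTop 2] with N hN <;>
    rw [hS N]
  · exact sum_Ico_mul_reflect_nonneg (hu N hN) i
  · exact sum_Ico_mul_reflect_le (hu N hN) ((hφ N hN).sum_range_mul_neg_le hN hε.le hc t ht) i
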